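/- arXiv:2605.14429 — 9 statements merged into one kernel-verified Lean document; each statement's English description precedes it below -/
import Mathlib

section
/- For every real x with 0 ≤ x ≤ 0.7425, one has (2/√3)·√(1 − x²) + 3x² ≤ (2/√3)·√(1 − 0.7425²) + 3·0.7425²; in particular this quantity is at most 2.428. (Equivalently, the function f₁(x) = (2/√3)√(1 − x²) + 3x² is maximized on [0, 0.7425] at x = 0.7425.) -/
theorem stmt_11 (x : ℝ) (hx0 : 0 ≤ x) (hxa : x ≤ 0.7425) :
    (2 / Real.sqrt 3) * Real.sqrt (1 - x ^ 2) + 3 * x ^ 2 ≤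
      (2 / Real.sqrt 3) * Real.sqrt (1 - 0.7425 ^ 2) + 3 * 0.7425 ^ 2 ∧
    (2 / Real.sqrt 3) * Real.sqrt (1 - 0.7425 ^ 2) + 3 * 0.7425 ^ 2 ≤ 2.428 := by
  have hx2 : (0:ℝ) ≤ 1 - x ^ 2 := by nlinarith
  have ha2 : (0:ℝ) ≤ 1 - (0.7425:ℝ) ^ 2 := by norm_num
  set s1 := Real.sqrt (1 - x ^ 2) with hs1def
  set s2 := Real.sqrt (1 - (0.7425:ℝ) ^ 2) with hs2def
  set t := Real.sqrt 3 with htdef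
  have hs1sq : s1 ^ 2 = 1 - x ^ 2 := Real.sq_sqrt hx2
  have hs2sq : s2 ^ 2 = 1 - (0.7425:ℝ) ^ 2 := Real.sq_sqrt ha2
  have htsq : t ^ 2 = 3 := Real.sq_sqrt (by norm_num)
  have hs1n : 0 ≤ s1 := Real.sqrt_nonneg _
  have hs2n : 0 ≤ s2 := Real.sqrt_nonneg _
  have htn : 0 ≤ t := Real.sqrt_nonneg _
  have hs2lb : (0.6698:ℝ) ≤ s2 := by nlinarith
  have hs2ub : s2 ≤ (0.6699:ℝ) := by nlinarith
  have htlb : (1.732:ℝ) ≤ t := by nlinarith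
  have htub : t ≤ (1.7321:ℝ) := by nlinarith
  have h12 : s2 ≤ s1 := Real.sqrt_le_sqrt (by nlinarith)
  have htpos : (0:ℝ) < t := by linarith
  have hct : 2 / t = 2 * t / 3 := by
    field_simp
    nlinarith
  rw [hct]
  constructor
  · have key : (s1 - s2) * (9 * (s1 + s2) - 2 * t) ≥ 0 := by
      apply mul_nonneg (by linarith)
      nlinarith
    nlinarith [key, hs1sq, hs2sq]
  · nlinarith [mul_le_mul htub hs2ub hs2n (by norm_num : (0:ℝ) ≤ (1.7321:ℝ))]
end

section
/- Let a = 0.7425, b = √((2√7 − 5)/3), and Ω = {(x, y) ∈ ℝ² : 0 ≤ x ≤ a and 0 ≤ y ≤ min((1 + x²)/2, √((1 − x²)/3))}. Then for every (x, y) ∈ Ω, f₂(x, y) = 4x³ + 6xy + (2/√5)·√(1 − x² − 3y²) ≤ 3.462. -/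
theorem stmt_12 (x y : ℝ) (hx0 : 0 ≤ x) (hxa : x ≤ 0.7425) (hy0 : 0 ≤ y)
    (hy : y ≤ min ((1 + x ^ 2) / 2) (Real.sqrt ((1 - x ^ 2) / 3))) :
    4 * x ^ 3 + 6 * x * y + (2 / Real.sqrt 5) * Real.sqrt (1 - x ^ 2 - 3 * y ^ 2) ≤ 3.462 := by
  have hr0 : 0 ≤ Real.sqrt 5 := Real.sqrt_nonneg 5
  have hr2 : Real.sqrt 5 ^ 2 = 5 := Real.sq_sqrt (by norm_num)
  set r := Real.sqrt 5 with hr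
  have hrlb : 2.236 ≤ r := by nlinarith [hr2, hr0]
  have hrub : r ≤ 2.2360680 := by nlinarith [hr2, hr0]
  have hu : (0:ℝ) ≤ (1 - x ^ 2) / 3 := by nlinarith
  have hy2 : y ^ 2 ≤ (1 - x ^ 2) / 3 := by
    have h1 : y ≤ Real.sqrt ((1 - x ^ 2) / 3) := le_trans hy (min_le_right _ _)
    have h2 : y ^ 2 ≤ Real.sqrt ((1 - x ^ 2) / 3) ^ 2 := pow_le_pow_left₀ hy0 h1 2
    rwa [Real.sq_sqrt hu] at h2
  have hs : (0:ℝ) ≤ 1 - x ^ 2 - 3 * y ^ 2 := by nlinarith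
  have hs0 : 0 ≤ Real.sqrt (1 - x ^ 2 - 3 * y ^ 2) := Real.sqrt_nonneg _
  have hs2 : Real.sqrt (1 - x ^ 2 - 3 * y ^ 2) ^ 2 = 1 - x ^ 2 - 3 * y ^ 2 :=
    Real.sq_sqrt hs
  have hsb : 1100 * Real.sqrt (1 - x ^ 2 - 3 * y ^ 2)
      ≤ 2500 * (1 - x ^ 2 - 3 * y ^ 2) + 121 := by
    nlinarith [sq_nonneg (Real.sqrt (1 - x ^ 2 - 3 * y ^ 2) - 0.22), hs2]
  have hrne : r ≠ 0 := by positivity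
  have hinv : (2:ℝ) / r = 2 * r / 5 := by
    rw [div_eq_div_iff hrne (by norm_num : (5:ℝ) ≠ 0)]
    linear_combination (-2 : ℝ) * hr2
  rw [hinv]
  have key : r * (1100 * Real.sqrt (1 - x ^ 2 - 3 * y ^ 2))
      ≤ r * (2500 * (1 - x ^ 2 - 3 * y ^ 2) + 121) :=
    mul_le_mul_of_nonneg_left hsb hr0
  -- quadratic-in-y certificate: 2.2·x·y ≤ r·y² + 0.242·r·x²
  have hhint : 0 ≤ r * y ^ 2 - 2.2 * x * y + 0.242 * r * x ^ 2 := by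
    have h := mul_nonneg hr0 (sq_nonneg (y - 0.22 * r * x))
    have hid : r * y ^ 2 - 2.2 * x * y + 0.242 * r * x ^ 2
        = r * (y - 0.22 * r * x) ^ 2
          + (r ^ 2 - 5) * (0.44 * x * y - 0.0484 * r * x ^ 2) := by ring
    rw [hid, hr2]
    nlinarith [h]
  have hax : (0:ℝ) ≤ 0.7425 - x := by linarith
  have haxx2 : (0:ℝ) ≤ (0.7425 - x) * x ^ 2 := by positivity
  have haxx : (0:ℝ) ≤ (0.7425 - x) * x := by positivity
  have hB2 : (0:ℝ) ≤ 2.2360680 - r := by linarith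
  have hB1 : (0:ℝ) ≤ (0.7425 - x) * (0.7425 + x) * (2.2360680 - r) :=
    mul_nonneg (mul_nonneg hax (by linarith)) hB2
  nlinarith [key, hhint, haxx2, haxx, hax, hB1, hB2]
end

section
/- Let a = 0.7425, b = √((2√7 − 5)/3), and Ω = {(x, y) ∈ ℝ² : 0 ≤ x ≤ a and 0 ≤ y ≤ min((1 + x²)/2, √((1 − x²)/3))}. Then for every (x, y) ∈ Ω, f₃(x, y) = 5x⁴ + 12x²y + 3y² + (2/√7 + (6/√5)x)·√(1 − x² − 3y²) ≤ 4.994. -/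
theorem stmt_13 (x y : ℝ) (hx0 : 0 ≤ x) (hxa : x ≤ 0.7425) (hy0 : 0 ≤ y)
    (hy : y ≤ min ((1 + x ^ 2) / 2) (Real.sqrt ((1 - x ^ 2) / 3))) :
    5 * x ^ 4 + 12 * x ^ 2 * y + 3 * y ^ 2 + (2 / Real.sqrt 7 + (6 / Real.sqrt 5) * x) * Real.sqrt (1 - x ^ 2 - 3 * y ^ 2) ≤ 4.994 := by
  have hx1 : x ^ 2 ≤ 0.7425 ^ 2 := by nlinarith
  have ht0 : (0:ℝ) ≤ (1 - x ^ 2) / 3 := by nlinarith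
  have hyb : y ≤ Real.sqrt ((1 - x ^ 2) / 3) := le_trans hy (min_le_right _ _)
  have hy2 : y ^ 2 ≤ (1 - x ^ 2) / 3 := by
    have h1 := pow_le_pow_left₀ hy0 hyb 2
    rwa [Real.sq_sqrt ht0] at h1
  have harg : 0 ≤ 1 - x ^ 2 - 3 * y ^ 2 := by nlinarith
  set s := Real.sqrt (1 - x ^ 2 - 3 * y ^ 2) with hs
  have hs0 : 0 ≤ s := Real.sqrt_nonneg _
  have hs2 : s ^ 2 = 1 - x ^ 2 - 3 * y ^ 2 := Real.sq_sqrt harg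
  -- bounds on the constants
  have h7 : (2.645751 : ℝ) ≤ Real.sqrt 7 := by
    have := Real.sq_sqrt (by norm_num : (0:ℝ) ≤ 7)
    have := Real.sqrt_nonneg (7:ℝ)
    nlinarith
  have h5 : (2.2360679 : ℝ) ≤ Real.sqrt 5 := by
    have := Real.sq_sqrt (by norm_num : (0:ℝ) ≤ 5)
    have := Real.sqrt_nonneg (5:ℝ)
    nlinarith
  have h7p : (0:ℝ) < Real.sqrt 7 := lt_of_lt_of_le (by norm_num) h7
  have h5p : (0:ℝ) < Real.sqrt 5 := lt_of_lt_of_le (by norm_num) h5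
  have hc7 : 2 / Real.sqrt 7 ≤ 0.75593 := by
    rw [div_le_iff₀ h7p]; nlinarith
  have hc5 : 6 / Real.sqrt 5 ≤ 2.683283 := by
    rw [div_le_iff₀ h5p]; nlinarith
  have hc : (2 / Real.sqrt 7 + (6 / Real.sqrt 5) * x) * s ≤ (0.75593 + 2.683283 * x) * s := by
    apply mul_le_mul_of_nonneg_right _ hs0
    have : (6 / Real.sqrt 5) * x ≤ 2.683283 * x := mul_le_mul_of_nonneg_right hc5 hx0
    linarith
  have key : 5 * x ^ 4 + 12 * x ^ 2 * y + 3 * y ^ 2 + (0.75593 + 2.683283 * x) * s ≤ 4.994 := by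
    nlinarith [sq_nonneg ((17/2) * s - (0.75593 + 2.683283 * x)),
      sq_nonneg (13 * y - 8 * x ^ 2),
      mul_nonneg (sub_nonneg.2 hxa) hx0,
      mul_nonneg (mul_nonneg (sub_nonneg.2 hxa) hx0) hx0,
      mul_nonneg (mul_nonneg (mul_nonneg (sub_nonneg.2 hxa) hx0) hx0) hx0,
      mul_nonneg (sub_nonneg.2 hxa) (sub_nonneg.2 hxa),
      sq_nonneg (x - 0.7425), sq_nonneg x, hs2, hs0, hx0, hxa]
  linarith
end

section
/- Let a = 0.7425, b = √((2√7 − 5)/3), and Ω = {(x, y) ∈ ℝ² : 0 ≤ x ≤ a and 0 ≤ y ≤ min((1 + x²)/2, √((1 − x²)/3))}. Then for every (x, y) ∈ Ω, f₄(x, y) = (3/a − 4)x³ + (6 − 2/a)xy + (2/√5)·√(1 − x² − 3y²) ≤ 1.175. -/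
theorem stmt_14 (x y : ℝ) (hx0 : 0 ≤ x) (hxa : x ≤ 0.7425) (hy0 : 0 ≤ y)
    (hy : y ≤ min ((1 + x ^ 2) / 2) (Real.sqrt ((1 - x ^ 2) / 3))) :
    (3 / 0.7425 - 4) * x ^ 3 + (6 - 2 / 0.7425) * x * y + (2 / Real.sqrt 5) * Real.sqrt (1 - x ^ 2 - 3 * y ^ 2) ≤ 1.175 := by
  have hy2 : y ≤ Real.sqrt ((1 - x ^ 2) / 3) := le_trans hy (min_le_right _ _)
  have hnn : (0:ℝ) ≤ (1 - x ^ 2) / 3 := by nlinarith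
  have hyy : y ^ 2 ≤ (1 - x ^ 2) / 3 := by
    have h := Real.sq_sqrt hnn
    nlinarith [Real.sqrt_nonneg ((1 - x ^ 2) / 3)]
  have harg : (0:ℝ) ≤ 1 - x ^ 2 - 3 * y ^ 2 := by nlinarith
  set s := Real.sqrt (1 - x ^ 2 - 3 * y ^ 2) with hsdef
  have hs0 : 0 ≤ s := Real.sqrt_nonneg _
  have hs2 : s ^ 2 = 1 - x ^ 2 - 3 * y ^ 2 := Real.sq_sqrt harg
  -- bound 2/√5 ≤ 0.8944273
  have h5 : (2.2360679:ℝ) ≤ Real.sqrt 5 := by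
    rw [show (2.2360679:ℝ) = Real.sqrt (2.2360679^2) by rw [Real.sqrt_sq]; norm_num]
    exact Real.sqrt_le_sqrt (by norm_num)
  have hpos : (0:ℝ) < Real.sqrt 5 := by positivity
  have hk : (2 / Real.sqrt 5) * s ≤ 0.8944273 * s := by
    have h1 : 2 / Real.sqrt 5 ≤ 0.8944273 := by
      rw [div_le_iff₀ hpos]; nlinarith
    exact mul_le_mul_of_nonneg_right h1 hs0
  -- quartic certificate
  have hH : 0 ≤ (18999980501471/100000000000000 : ℝ) - 3/10*x - 76359397/165391875*x^2
      + 988/1375*x^3 + 788/20625*x^4 := by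
    nlinarith [sq_nonneg (x - 0.6237), mul_nonneg hx0 (sq_nonneg (x - 0.6237)),
      mul_nonneg (sub_nonneg.2 hxa) (sq_nonneg (x - 0.6237)),
      mul_nonneg hx0 (sub_nonneg.2 hxa), sq_nonneg (x*(x-0.6237))]
  have hL : (0:ℝ) < 0.9 + 0.12*x := by nlinarith
  have key : (4/99 : ℝ) * x ^ 3 + (982/297) * x * y + 0.8944273 * s ≤ 1.175 := by
    nlinarith [hH, hs2, hL, sq_nonneg (6*(0.9+0.12*x)*y - 982/297*x),
      sq_nonneg (2*(0.9+0.12*x)*s - 0.8944273), sq_nonneg (0.9+0.12*x)]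
  have e1 : (3 / 0.7425 - 4 : ℝ) = 4/99 := by norm_num
  have e2 : (6 - 2 / 0.7425 : ℝ) = 982/297 := by norm_num
  rw [e1, e2]
  linarith
end

section
/- Let a = 0.7425, b = √((2√7 − 5)/3), and Ω = {(x, y) ∈ ℝ² : 0 ≤ x ≤ a and 0 ≤ y ≤ min((1 + x²)/2, √((1 − x²)/3))}. Then for every (x, y) ∈ Ω, f₅(x, y) = (4/a − 5)x⁴ + (12 − 6/a)x²y + 3y² + (2/√7 + (1/√5)(6 − 2/a)x)·√(1 − x² − 3y²) ≤ 1.823. -/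
set_option maxHeartbeats 1000000 in
theorem stmt_15 (x y : ℝ) (hx0 : 0 ≤ x) (hxa : x ≤ 0.7425) (hy0 : 0 ≤ y)
    (hy : y ≤ min ((1 + x ^ 2) / 2) (Real.sqrt ((1 - x ^ 2) / 3))) :
    (4 / 0.7425 - 5) * x ^ 4 + (12 - 6 / 0.7425) * x ^ 2 * y + 3 * y ^ 2 + (2 / Real.sqrt 7 + (1 / Real.sqrt 5) * (6 - 2 / 0.7425) * x) * Real.sqrt (1 - x ^ 2 - 3 * y ^ 2) ≤ 1.823 := by
  have hy' : y ≤ Real.sqrt ((1 - x ^ 2) / 3) := le_trans hy (min_le_right _ _)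
  have hx1 : x ^ 2 ≤ 1 := by nlinarith
  have hy2 : y ^ 2 ≤ (1 - x ^ 2) / 3 := by
    have h := Real.sq_sqrt (show (0:ℝ) ≤ (1 - x ^ 2) / 3 by linarith)
    nlinarith [Real.sqrt_nonneg ((1 - x ^ 2) / 3)]
  set u := Real.sqrt (1 - x ^ 2 - 3 * y ^ 2) with hu_def
  have hu0 : 0 ≤ u := Real.sqrt_nonneg _
  have hu2 : u ^ 2 = 1 - x ^ 2 - 3 * y ^ 2 := Real.sq_sqrt (by linarith)
  -- bounds on the irrational constants
  have h7 : (2645751/1000000 : ℝ) ≤ Real.sqrt 7 := by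
    nlinarith [Real.sq_sqrt (show (0:ℝ) ≤ 7 by norm_num), Real.sqrt_nonneg 7]
  have h5 : (22360679/10000000 : ℝ) ≤ Real.sqrt 5 := by
    nlinarith [Real.sq_sqrt (show (0:ℝ) ≤ 5 by norm_num), Real.sqrt_nonneg 5]
  have h7p : (0:ℝ) < Real.sqrt 7 := lt_of_lt_of_le (by norm_num) h7
  have h5p : (0:ℝ) < Real.sqrt 5 := lt_of_lt_of_le (by norm_num) h5
  have hc1 : 2 / Real.sqrt 7 ≤ (2000000/2645751 : ℝ) := by
    rw [div_le_iff₀ h7p]; nlinarith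
  have hc2 : 1 / Real.sqrt 5 ≤ (10000000/22360679 : ℝ) := by
    rw [div_le_iff₀ h5p]; nlinarith
  -- replace the irrational coefficients by rational upper bounds
  have hk : (0:ℝ) ≤ 6 - 2 / 0.7425 := by norm_num
  have hcoef : 2 / Real.sqrt 7 + (1 / Real.sqrt 5) * (6 - 2 / 0.7425) * x
      ≤ (2000000/2645751 : ℝ) + (9820000000/6641121663 : ℝ) * x := by
    have h2 : (1 / Real.sqrt 5) * (6 - 2 / 0.7425) * x
        ≤ (10000000/22360679 : ℝ) * (6 - 2 / 0.7425) * x := by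
      apply mul_le_mul_of_nonneg_right _ hx0
      exact mul_le_mul_of_nonneg_right hc2 hk
    have : (10000000/22360679 : ℝ) * (6 - 2 / 0.7425) = (9820000000/6641121663 : ℝ) := by
      norm_num
    linarith [this ▸ h2, hc1]
  have hstep : (2 / Real.sqrt 7 + (1 / Real.sqrt 5) * (6 - 2 / 0.7425) * x) * u
      ≤ ((2000000/2645751 : ℝ) + (9820000000/6641121663 : ℝ) * x) * u :=
    mul_le_mul_of_nonneg_right hcoef hu0
  -- the rationalized main inequality
  set c1 : ℝ := 2000000/2645751
  set c2 : ℝ := 9820000000/6641121663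
  set L : ℝ := 5/4 + 23/20 * x with hL_def
  have hL1 : (0:ℝ) ≤ L - 1 := by rw [hL_def]; nlinarith
  have hLpos : (0:ℝ) < L := by rw [hL_def]; nlinarith
  have hR : (0:ℝ) ≤ 12*L*(L-1)*(1823/1000 - L + L*x^2 - (115/297)*x^4)
      - L*(388/99)^2*x^4 - 3*(L-1)*(c1 + c2*x)^2 := by
    rw [hL_def]
    have h1 : (0:ℝ) ≤ 0.7425 - x := by linarith
    nlinarith [mul_nonneg (mul_nonneg hx0 h1) (sq_nonneg (x - 0.7178)),
      mul_nonneg hx0 (sq_nonneg (x - 0.7178)),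
      mul_nonneg h1 (sq_nonneg (x - 0.7178)),
      sq_nonneg (x - 0.7178), sq_nonneg x,
      mul_nonneg (mul_nonneg hx0 hx0) (sq_nonneg (x - 0.7178)),
      mul_nonneg (mul_nonneg h1 h1) (sq_nonneg (x - 0.7178))]
  have hS1 : (0:ℝ) ≤ L * (6*(L-1)*y - (388/99)*x^2)^2 :=
    mul_nonneg hLpos.le (sq_nonneg _)
  have hS2 : (0:ℝ) ≤ 3*(L-1) * (2*L*u - (c1 + c2*x))^2 :=
    mul_nonneg (by linarith) (sq_nonneg _)
  have expand : (1823/1000 - ((115/297)*x^4 + (388/99)*x^2*y + 3*y^2 + (c1 + c2*x)*u))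
        * (12*L*(L-1))
      = L * (6*(L-1)*y - (388/99)*x^2)^2 + 3*(L-1) * (2*L*u - (c1 + c2*x))^2
        + (12*L*(L-1)*(1823/1000 - L + L*x^2 - (115/297)*x^4)
          - L*(388/99)^2*x^4 - 3*(L-1)*(c1 + c2*x)^2) := by
    linear_combination (-(12*L^2*(L-1))) * hu2
  have hprod : (0:ℝ) < 12*L*(L-1) := by rw [hL_def]; nlinarith
  have h2 : 0 ≤ (1823/1000 - ((115/297)*x^4 + (388/99)*x^2*y + 3*y^2 + (c1 + c2*x)*u))
      * (12*L*(L-1)) := by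
    rw [expand]; exact add_nonneg (add_nonneg hS1 hS2) hR
  have hmain : (115/297)*x^4 + (388/99)*x^2*y + 3*y^2 + (c1 + c2*x)*u ≤ 1823/1000 := by
    have h3 := (mul_nonneg_iff_of_pos_right hprod).mp h2
    linarith
  have hA : (4 / 0.7425 - 5 : ℝ) = 115/297 := by norm_num
  have hB : (12 - 6 / 0.7425 : ℝ) = 388/99 := by norm_num
  rw [hA, hB]
  calc (115/297) * x ^ 4 + (388/99) * x ^ 2 * y + 3 * y ^ 2
        + (2 / Real.sqrt 7 + (1 / Real.sqrt 5) * (6 - 2 / 0.7425) * x) * u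
      ≤ (115/297) * x ^ 4 + (388/99) * x ^ 2 * y + 3 * y ^ 2 + (c1 + c2*x) * u := by
        linarith [hstep]
    _ ≤ 1823/1000 := by linarith [hmain]
    _ ≤ (1.823:ℝ) := by norm_num
end

section
/- Let a = 0.7425, b = √((2√7 − 5)/3), and Ω = {(x, y) ∈ ℝ² : 0 ≤ x ≤ a and 0 ≤ y ≤ min((1 + x²)/2, √((1 − x²)/3))}. Then for every (x, y) ∈ Ω, f₆(x, y) = x⁴ + 4y² + (4/√5)·x·√(1 − x² − 3y²) ≤ 1.281. -/
set_option maxHeartbeats 1000000 in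
theorem stmt_16 (x y : ℝ) (hx0 : 0 ≤ x) (hxa : x ≤ 0.7425) (hy0 : 0 ≤ y)
    (hy : y ≤ min ((1 + x ^ 2) / 2) (Real.sqrt ((1 - x ^ 2) / 3))) :
    x ^ 4 + 4 * y ^ 2 + (4 / Real.sqrt 5) * x * Real.sqrt (1 - x ^ 2 - 3 * y ^ 2) ≤ 1.281 := by
  set r := Real.sqrt 5 with hrdef
  have hr0 : 0 < r := Real.sqrt_pos.2 (by norm_num)
  have hr2 : r ^ 2 = 5 := Real.sq_sqrt (by norm_num)
  have hyc : y ≤ (1 + x ^ 2) / 2 := le_trans hy (min_le_left _ _)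
  have hys : y ≤ Real.sqrt ((1 - x ^ 2) / 3) := le_trans hy (min_le_right _ _)
  have hc : (0:ℝ) ≤ (1 - x ^ 2) / 3 := by nlinarith
  have hy2 : y ^ 2 ≤ (1 - x ^ 2) / 3 := by
    have h1 := Real.sq_sqrt hc
    have h2 := pow_le_pow_left₀ hy0 hys 2
    linarith
  have harg : (0:ℝ) ≤ 1 - x ^ 2 - 3 * y ^ 2 := by linarith
  set s := Real.sqrt (1 - x ^ 2 - 3 * y ^ 2) with hsdef
  have hs0 : 0 ≤ s := Real.sqrt_nonneg _
  have hs2 : s ^ 2 = 1 - x ^ 2 - 3 * y ^ 2 := Real.sq_sqrt harg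
  have hysq := mul_self_le_mul_self hy0 hyc
  rcases le_or_gt x 0.285 with hxB | hxA
  · -- small x case: compare squares
    have hu : x ^ 2 ≤ 0.081225 := by nlinarith
    have hM : 0 ≤ 1.281 - x ^ 4 - 4 * y ^ 2 := by nlinarith [sq_nonneg x]
    have hR : (0:ℝ) ≤ 100 * (x^2)^4 + 260 * (x^2)^3 + 271.9 * (x^2)^2 - 48.1 * (x^2) + 78961/40000 := by
      nlinarith [sq_nonneg (x^2 - 0.0791), mul_nonneg (sq_nonneg x) (by linarith : (0:ℝ) ≤ 0.081225 - x^2), sq_nonneg x]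
    have hbr : (0:ℝ) ≤ 40 * (6.405 - 5 * x^4) - 240 * x^2 - 400 * (y^2 + (1 + x^2)^2/4) := by
      nlinarith [sq_nonneg x]
    have hprod := mul_nonneg (by nlinarith : (0:ℝ) ≤ (1 + x^2)^2/4 - y^2) hbr
    have hQ : 80 * x^2 * (1 - x^2 - 3*y^2) ≤ (6.405 - 5*x^4 - 20*y^2)^2 := by nlinarith [hR, hprod]
    have hsq : ((4 / r) * x * s)^2 ≤ (1.281 - x ^ 4 - 4 * y ^ 2)^2 := by
      have he : ((4 / r) * x * s)^2 = 16/5 * (x^2 * s^2) := by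
        rw [mul_pow, mul_pow, div_pow, hr2]; ring
      rw [he, hs2]; nlinarith [hQ]
    have hfs : 0 ≤ (4 / r) * x * s := by positivity
    nlinarith [hsq, hfs, hM]
  · -- large x case: AM-GM elimination of s
    have key : (4 / r) * x * s ≤ (4/3) * s^2 + (3/5) * x^2 := by
      rw [div_mul_eq_mul_div, div_mul_eq_mul_div, div_le_iff₀ hr0]
      nlinarith [sq_nonneg (10*s - 3*r*x), hr2, hr0.le]
    have hu1 : (0.081225:ℝ) ≤ x^2 := by nlinarith
    have hu2 : x^2 ≤ (0.55130625:ℝ) := by nlinarith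
    nlinarith [key, hs2, mul_nonneg (by linarith : (0:ℝ) ≤ x^2 - 0.081225) (by linarith : (0:ℝ) ≤ 0.55130625 - x^2)]
end

section
/- Let a = 0.7425, b = √((2√7 − 5)/3), and Ω = {(x, y) ∈ ℝ² : 0 ≤ x ≤ a and 0 ≤ y ≤ min((1 + x²)/2, √((1 − x²)/3))}. Then for every (x, y) ∈ Ω, f₈(x, y) = x³/3 + xy + (1/√5)·√(1 − x² − 3y²) ≤ 0.552. -/
theorem stmt_17 (x y : ℝ) (hx0 : 0 ≤ x) (hxa : x ≤ 0.7425) (hy0 : 0 ≤ y)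
    (hy : y ≤ min ((1 + x ^ 2) / 2) (Real.sqrt ((1 - x ^ 2) / 3))) :
    x ^ 3 / 3 + x * y + (1 / Real.sqrt 5) * Real.sqrt (1 - x ^ 2 - 3 * y ^ 2) ≤ 0.552 := by
  have hx1 : x ^ 2 ≤ 1 := by nlinarith
  have hy2 : y ^ 2 ≤ (1 - x ^ 2) / 3 := by
    have h := le_trans hy (min_le_right _ _)
    have := (Real.le_sqrt hy0 (by nlinarith : (0:ℝ) ≤ (1 - x ^ 2) / 3)).mp h
    linarith
  have hnn : 0 ≤ 1 - x ^ 2 - 3 * y ^ 2 := by linarith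
  set v := Real.sqrt (1 - x ^ 2 - 3 * y ^ 2) with hv
  have hv0 : 0 ≤ v := Real.sqrt_nonneg _
  have hv2 : v ^ 2 = 1 - x ^ 2 - 3 * y ^ 2 := Real.sq_sqrt hnn
  set w := 1 / Real.sqrt 5 with hwdef
  have hw0 : 0 ≤ w := by positivity
  have hw2 : w ^ 2 = 1 / 5 := by
    rw [hwdef, div_pow, one_pow, Real.sq_sqrt (by norm_num : (5:ℝ) ≥ 0)]
  -- Cauchy-Schwarz step
  have hcs : (x * y + w * v) ^ 2 ≤ (x ^ 2 / 3 + 1 / 5) * (1 - x ^ 2) := by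
    have h1 : (x * y + w * v) ^ 2 ≤ (x ^ 2 / 3 + w ^ 2) * (3 * y ^ 2 + v ^ 2) := by
      nlinarith [sq_nonneg (x * v - 3 * w * y)]
    calc (x * y + w * v) ^ 2 ≤ (x ^ 2 / 3 + w ^ 2) * (3 * y ^ 2 + v ^ 2) := h1
      _ = (x ^ 2 / 3 + 1 / 5) * (1 - x ^ 2) := by rw [hw2, hv2]; ring
  have hB : (0:ℝ) < 0.552 - x ^ 3 / 3 := by nlinarith
  have hpoly : (x ^ 2 / 3 + 1 / 5) * (1 - x ^ 2) ≤ (0.552 - x ^ 3 / 3) ^ 2 := by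
    nlinarith [sq_nonneg x, sq_nonneg (x - 0.7425), mul_nonneg hx0 hx0,
      mul_nonneg (mul_nonneg hx0 hx0) hx0, sq_nonneg (x^2 - 0.55), sq_nonneg (x^3 - 0.4),
      mul_nonneg (sub_nonneg.mpr hxa) hx0, mul_nonneg (mul_nonneg (sub_nonneg.mpr hxa) hx0) hx0]
  have hmain : x * y + w * v ≤ 0.552 - x ^ 3 / 3 := by
    rcases le_or_gt (x * y + w * v) 0 with h | h
    · linarith
    · nlinarith [hcs, hpoly]
  linarith
end

section
/- Let a = 0.7425, b = √((2√7 − 5)/3), and Ω = {(x, y) ∈ ℝ² : 0 ≤ x ≤ a and 0 ≤ y ≤ min((1 + x²)/2, √((1 − x²)/3))}. Then for every (x, y) ∈ Ω, f₉(x, y) = x⁴/4 + x²y + y²/2 + (x/√5 + 1/√7)·√(1 − x² − 3y²) ≤ 0.614. -/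
set_option maxHeartbeats 1000000 in
private lemma stmt_18_key (x y s : ℝ) (hx0 : 0 ≤ x) (hxa : x ≤ 0.7425) (hy0 : 0 ≤ y)
    (hs2 : s ^ 2 = 1 - x ^ 2 - 3 * y ^ 2) :
    (0.4473 * x + 0.37798) * s + x ^ 4 / 4 + x ^ 2 * y + y ^ 2 / 2 ≤ 0.614 := by
  rcases le_or_gt x 0.33 with hb1 | hb1
  · have hCs : 1.14 * ((0.4473 * x + 0.37798) * s) ≤
        (0.4473 * x + 0.37798) ^ 2 + 0.3249 * (1 - x ^ 2 - 3 * y ^ 2) := by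
      nlinarith [sq_nonneg (0.4473 * x + 0.37798 - 0.57 * s), hs2]
    have hA : 0 ≤ x * (0.33 - x) := mul_nonneg hx0 (by linarith)
    nlinarith [hCs, sq_nonneg (0.71 * y - x ^ 2), hA, mul_nonneg hA hx0,
      mul_nonneg hA (sq_nonneg x), sq_nonneg x]
  · rcases le_or_gt x 0.55 with hb2 | hb2
    · have hCs : 1.9 * ((0.4473 * x + 0.37798) * s) ≤
          (0.4473 * x + 0.37798) ^ 2 + 0.9025 * (1 - x ^ 2 - 3 * y ^ 2) := by
        nlinarith [sq_nonneg (0.4473 * x + 0.37798 - 0.95 * s), hs2]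
      have hA : 0 ≤ (x - 0.33) * (0.55 - x) := mul_nonneg (by linarith) (by linarith)
      nlinarith [hCs, sq_nonneg (1.85 * y - x ^ 2), hA,
        mul_nonneg hA (by linarith : (0:ℝ) ≤ x - 0.33),
        mul_nonneg hA (sq_nonneg (x - 0.33)), sq_nonneg (x - 0.33)]
    · rcases le_or_gt x 0.69 with hb3 | hb3
      · have hCs : 2.24 * ((0.4473 * x + 0.37798) * s) ≤
            (0.4473 * x + 0.37798) ^ 2 + 1.2544 * (1 - x ^ 2 - 3 * y ^ 2) := by
          nlinarith [sq_nonneg (0.4473 * x + 0.37798 - 1.12 * s), hs2]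
        have hA : 0 ≤ (x - 0.55) * (0.69 - x) := mul_nonneg (by linarith) (by linarith)
        nlinarith [hCs, sq_nonneg (2.36 * y - x ^ 2), hA,
          mul_nonneg hA (by linarith : (0:ℝ) ≤ x - 0.55),
          mul_nonneg hA (sq_nonneg (x - 0.55)), sq_nonneg (x - 0.55)]
      · have hCs : 2.46 * ((0.4473 * x + 0.37798) * s) ≤
            (0.4473 * x + 0.37798) ^ 2 + 1.5129 * (1 - x ^ 2 - 3 * y ^ 2) := by
          nlinarith [sq_nonneg (0.4473 * x + 0.37798 - 1.23 * s), hs2]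
        have hA : 0 ≤ (x - 0.69) * (0.7425 - x) := mul_nonneg (by linarith) (by linarith)
        nlinarith [hCs, sq_nonneg (2.69 * y - x ^ 2), hA,
          mul_nonneg hA (by linarith : (0:ℝ) ≤ x - 0.69),
          mul_nonneg hA (sq_nonneg (x - 0.69)), sq_nonneg (x - 0.69)]

theorem stmt_18 (x y : ℝ) (hx0 : 0 ≤ x) (hxa : x ≤ 0.7425) (hy0 : 0 ≤ y)
    (hy : y ≤ min ((1 + x ^ 2) / 2) (Real.sqrt ((1 - x ^ 2) / 3))) :
    x ^ 4 / 4 + x ^ 2 * y + y ^ 2 / 2 + (x / Real.sqrt 5 + 1 / Real.sqrt 7) * Real.sqrt (1 - x ^ 2 - 3 * y ^ 2) ≤ 0.614 := by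
  have hyb : y ≤ Real.sqrt ((1 - x ^ 2) / 3) := le_trans hy (min_le_right _ _)
  have hnn : (0:ℝ) ≤ (1 - x ^ 2) / 3 := by nlinarith
  have hy2 : y ^ 2 ≤ (1 - x ^ 2) / 3 := by
    nlinarith [Real.sq_sqrt hnn, Real.sqrt_nonneg ((1 - x ^ 2) / 3)]
  have hu0 : (0:ℝ) ≤ 1 - x ^ 2 - 3 * y ^ 2 := by nlinarith
  set s := Real.sqrt (1 - x ^ 2 - 3 * y ^ 2) with hsdef
  have hs0 : 0 ≤ s := Real.sqrt_nonneg _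
  have hs2 : s ^ 2 = 1 - x ^ 2 - 3 * y ^ 2 := Real.sq_sqrt hu0
  have h5 : (2.236:ℝ) ≤ Real.sqrt 5 := by
    rw [show (2.236:ℝ) = Real.sqrt (2.236 ^ 2) from (Real.sqrt_sq (by norm_num)).symm]
    apply Real.sqrt_le_sqrt; norm_num
  have h7 : (2.6457:ℝ) ≤ Real.sqrt 7 := by
    rw [show (2.6457:ℝ) = Real.sqrt (2.6457 ^ 2) from (Real.sqrt_sq (by norm_num)).symm]
    apply Real.sqrt_le_sqrt; norm_num
  have hs5 : (0:ℝ) < Real.sqrt 5 := by positivity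
  have hs7 : (0:ℝ) < Real.sqrt 7 := by positivity
  have h1 : x / Real.sqrt 5 ≤ 0.4473 * x := by
    rw [div_le_iff₀ hs5]
    nlinarith [mul_nonneg hx0 (sub_nonneg.2 h5)]
  have h2 : (1:ℝ) / Real.sqrt 7 ≤ 0.37798 := by
    rw [div_le_iff₀ hs7]
    nlinarith [h7]
  have hc : x / Real.sqrt 5 + 1 / Real.sqrt 7 ≤ 0.4473 * x + 0.37798 := by linarith
  have hcs : (x / Real.sqrt 5 + 1 / Real.sqrt 7) * s ≤ (0.4473 * x + 0.37798) * s :=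
    mul_le_mul_of_nonneg_right hc hs0
  have key := stmt_18_key x y s hx0 hxa hy0 hs2
  linarith
end

section
/- Let a = 0.7425, b = √((2√7 − 5)/3), and Ω = {(x, y) ∈ ℝ² : 0 ≤ x ≤ a and 0 ≤ y ≤ min((1 + x²)/2, √((1 − x²)/3))}. Then for every (x, y) ∈ Ω, f₇(x, y) = (x² + 2y)/2 ≤ 0.663. -/
theorem stmt_19 (x y : ℝ) (hx0 : 0 ≤ x) (hxa : x ≤ 0.7425) (hy0 : 0 ≤ y)
    (hy : y ≤ min ((1 + x ^ 2) / 2) (Real.sqrt ((1 - x ^ 2) / 3))) :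
    (x ^ 2 + 2 * y) / 2 ≤ 0.663 := by
  have h := hy.trans (min_le_right _ _)
  have hb : Real.sqrt ((1 - x ^ 2) / 3) ≤ 0.663 - x ^ 2 / 2 := by
    rw [show (0.663 - x ^ 2 / 2 : ℝ) = Real.sqrt ((0.663 - x ^ 2 / 2) ^ 2) from
      (Real.sqrt_sq (by nlinarith)).symm]
    apply Real.sqrt_le_sqrt
    nlinarith [sq_nonneg x, sq_nonneg (x ^ 2 - 0.56), mul_le_mul hxa hxa hx0 (by norm_num)]
  linarith
end
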